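/- arXiv:1803.03141 — 3 statements merged into one kernel-verified Lean document; each statement's English description precedes it below -/
import Mathlib

section
/- Let d ≥ 2. For every path γ of ℤ^d and every N ∈ ℕ*, there exists a *-connected macroscopic path Γ̃ = (i_1, …, i_r) (consecutive sites satisfy ‖i_{k+1} − i_k‖_∞ ≤ 1) such that every vertex of γ lies in ⋃_{i ∈ Γ̃} B'_N(i), and |Γ̃| ≤ 1 + (|γ| + 1)/N, where |γ| denotes the number of edges of γ. -/
open MeasureTheory Filter Topology
open scoped ENNReal

namespace Perco

/-- Vertices of the hypercubic lattice `ℤ^d`. -/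
abbrev V (d : ℕ) := Fin d → ℤ

/-- The `ℓ¹` distance on `ℤ^d`. -/
def dist1 {d : ℕ} (x y : V d) : ℕ := ∑ i, (x i - y i).natAbs

/-- The `ℓ¹` norm, as a real number. -/
def norm1 {d : ℕ} (x : V d) : ℝ := (dist1 x 0 : ℝ)

/-- The `ℓ¹` distance, descended to unordered pairs. -/
def sym2dist1 {d : ℕ} : Sym2 (V d) → ℕ :=
  Sym2.lift ⟨fun x y => dist1 x y, fun x y => by
    unfold dist1
    exact Finset.sum_congr rfl fun i _ => by rw [← Int.natAbs_neg, neg_sub]⟩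

/-- Edges of the lattice `(ℤ^d, 𝔼^d)`: unordered pairs of nearest neighbours. -/
def Edge (d : ℕ) : Type := {e : Sym2 (V d) // sym2dist1 e = 1}

/-- A bond percolation configuration: every edge is open (`true`) or closed (`false`). -/
abbrev Config (d : ℕ) := Edge d → Bool

/-- The unordered pair `e` is an open edge of the configuration `ω`. -/
def openE {d : ℕ} (ω : Config d) (e : Sym2 (V d)) : Prop :=
  ∃ h : sym2dist1 e = 1, ω ⟨e, h⟩ = true

/-- `⟨x, y⟩` is an open edge of the configuration `ω`. -/
def edgeOpen {d : ℕ} (ω : Config d) (x y : V d) : Prop := openE ω s(x, y)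

/-- `f 0, f 1, …, f n` is an `ω`-open path (with `n` edges). -/
def IsOpenPath {d : ℕ} (ω : Config d) (n : ℕ) (f : ℕ → V d) : Prop :=
  ∀ i < n, edgeOpen ω (f i) (f (i + 1))

/-- `f 0, …, f n` is a (not necessarily open) lattice path of `ℤ^d`. -/
def IsLatticePath {d : ℕ} (n : ℕ) (f : ℕ → V d) : Prop :=
  ∀ i < n, dist1 (f i) (f (i + 1)) = 1

/-- The chemical distance between `x` and `y` in the configuration `ω`:
the minimal number of edges of an `ω`-open path from `x` to `y` (`⊤` if there is none). -/
noncomputable def chemDist {d : ℕ} (ω : Config d) (x y : V d) : ℝ≥0∞ :=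
  sInf {r : ℝ≥0∞ | ∃ (n : ℕ) (f : ℕ → V d),
    IsOpenPath ω n f ∧ f 0 = x ∧ f n = y ∧ r = (n : ℝ≥0∞)}

/-- `x` and `y` are connected by an `ω`-open path. -/
def Connected {d : ℕ} (ω : Config d) (x y : V d) : Prop := chemDist ω x y ≠ ⊤

/-- The open cluster of the vertex `x`. -/
def cluster {d : ℕ} (ω : Config d) (x : V d) : Set (V d) := {y | Connected ω x y}

/-- `x` lies in an infinite open cluster. -/
def InInfiniteCluster {d : ℕ} (ω : Config d) (x : V d) : Prop := (cluster ω x).Infinite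

open Classical in
/-- The regularized point `x̃`: a point of the infinite cluster minimizing the `ℓ¹`
distance to `x` (with a deterministic rule to break ties); `x` itself if there is none. -/
noncomputable def regPoint {d : ℕ} (ω : Config d) (x : V d) : V d :=
  if h : ∃ y : V d, InInfiniteCluster ω y ∧
      ∀ z : V d, InInfiniteCluster ω z → dist1 x y ≤ dist1 x z
  then h.choose else x

/-- Real-valued chemical distance (in the configuration `ωdist`) between the
regularizations (w.r.t. the configuration `ωreg`) of `x` and `y`. -/
noncomputable def DReg {d : ℕ} (ωdist ωreg : Config d) (x y : V d) : ℝ :=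
  (chemDist ωdist (regPoint ωreg x) (regPoint ωreg y)).toReal

open Classical in
/-- The number of elements of a set, as an element of `ℝ≥0∞` (`⊤` for infinite sets). -/
noncomputable def eSize {α : Type*} (A : Set α) : ℝ≥0∞ :=
  if h : A.Finite then (h.toFinset.card : ℝ≥0∞) else ⊤

/-!  ### Boxes and renormalization  -/

/-- The box of "radius" `R` centered at `c`: `∏ₖ [c k - R, c k + R)`. -/
def boxC {d : ℕ} (c : V d) (R : ℕ) : Set (V d) :=
  {x | ∀ k, c k - (R : ℤ) ≤ x k ∧ x k < c k + (R : ℤ)}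

/-- The center `i(2N+1)` of the `N`-box of macroscopic index `i`. -/
def center {d : ℕ} (N : ℕ) (i : V d) : V d := fun k => i k * (2 * (N : ℤ) + 1)

/-- The `N`-box `B_N(i) = i(2N+1) + [-N, N)^d`. -/
def macroBox {d : ℕ} (N : ℕ) (i : V d) : Set (V d) := boxC (center N i) N

/-- The enlarged box `B'_N(i) = i(2N+1) + [-3N, 3N)^d`. -/
def macroBox' {d : ℕ} (N : ℕ) (i : V d) : Set (V d) := boxC (center N i) (3 * N)

/-- An open path all of whose vertices stay in the set `S`. -/
def IsOpenPathIn {d : ℕ} (ω : Config d) (S : Set (V d)) (n : ℕ) (f : ℕ → V d) : Prop :=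
  IsOpenPath ω n f ∧ ∀ i ≤ n, f i ∈ S

/-- `x` and `y` are connected by an open path inside `S`. -/
def ConnectedIn {d : ℕ} (ω : Config d) (S : Set (V d)) (x y : V d) : Prop :=
  ∃ (n : ℕ) (f : ℕ → V d), IsOpenPathIn ω S n f ∧ f 0 = x ∧ f n = y

/-- The open cluster of `x` inside the set `S`. -/
def clusterIn {d : ℕ} (ω : Config d) (S : Set (V d)) (x : V d) : Set (V d) :=
  {y | ConnectedIn ω S x y}

/-- `C` is an open cluster of the region `S`. -/
def IsClusterIn {d : ℕ} (ω : Config d) (S : Set (V d)) (C : Set (V d)) : Prop :=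
  ∃ x ∈ S, C = clusterIn ω S x

/-- The cluster `C` has diameter at least `m`. -/
def diamGE {d : ℕ} (C : Set (V d)) (m : ℕ) : Prop :=
  ∃ x ∈ C, ∃ y ∈ C, ∃ k, (m : ℤ) ≤ |x k - y k|

/-- The cluster `C` is crossing for the box `boxC c R`: for each of the `d` directions,
`C ∩ boxC c R` contains an open path connecting the two opposite faces of the box. -/
def CrossingFor {d : ℕ} (ω : Config d) (C : Set (V d)) (c : V d) (R : ℕ) : Prop :=
  ∀ k : Fin d, ∃ (n : ℕ) (f : ℕ → V d), IsOpenPath ω n f ∧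
    (∀ m ≤ n, f m ∈ C ∩ boxC c R) ∧ f 0 k = c k - (R : ℤ) ∧ f n k = c k + (R : ℤ) - 1

/-- The `N`-box `B_N(i)` is good (for the configuration `ω`, with parameter `β`):
(i) there is a unique open cluster `C` of `B'_N(i)` of diameter at least `N`;
(ii) `C` is crossing for each of the `3^d` `N`-boxes included in `B'_N(i)`;
(iii) any two points of `C ∩ B'_N(i)` are at chemical distance at most `12βN`. -/
def IsGoodBox {d : ℕ} (ω : Config d) (N : ℕ) (β : ℝ) (i : V d) : Prop :=
  ∃ C : Set (V d),
    IsClusterIn ω (macroBox' N i) C ∧ diamGE C N ∧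
    (∀ C', IsClusterIn ω (macroBox' N i) C' → diamGE C' N → C' = C) ∧
    (∀ j : V d, (∀ k, |j k - i k| ≤ 1) → CrossingFor ω C (center N j) N) ∧
    (∀ x ∈ macroBox' N i, ∀ y ∈ macroBox' N i, x ∈ C → y ∈ C →
      chemDist ω x y ≤ ENNReal.ofReal (12 * β * N))

/-- `x` belongs to the crossing cluster of the good box `B_N(j)`, i.e. to a cluster of
`B'_N(j)` of diameter at least `N`. -/
def InCrossingCluster {d : ℕ} (ω : Config d) (N : ℕ) (j : V d) (x : V d) : Prop :=
  ∃ C : Set (V d), IsClusterIn ω (macroBox' N j) C ∧ diamGE C N ∧ x ∈ C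

/-!  ### Macroscopic site percolation -/

/-- A nearest-neighbour path of macroscopic sites staying in `S`. -/
def IsSitePathIn {d : ℕ} (S : Set (V d)) (n : ℕ) (f : ℕ → V d) : Prop :=
  (∀ m ≤ n, f m ∈ S) ∧ ∀ m < n, dist1 (f m) (f (m + 1)) = 1

/-- The sites `i` and `j` are connected by a nearest-neighbour path inside `S`. -/
def SiteConnectedIn {d : ℕ} (S : Set (V d)) (i j : V d) : Prop :=
  ∃ (n : ℕ) (f : ℕ → V d), IsSitePathIn S n f ∧ f 0 = i ∧ f n = j

/-- A `*`-path of macroscopic sites staying in `S` (consecutive sites are `*`-neighbours: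
their `ℓ^∞` distance is `1`). -/
def IsStarPathIn {d : ℕ} (S : Set (V d)) (n : ℕ) (f : ℕ → V d) : Prop :=
  (∀ m ≤ n, f m ∈ S) ∧ ∀ m < n, f m ≠ f (m + 1) ∧ ∀ k, |f (m + 1) k - f m k| ≤ 1

/-- The set of good macroscopic sites. -/
def goodSites {d : ℕ} (ω : Config d) (N : ℕ) (β : ℝ) : Set (V d) :=
  {i | IsGoodBox ω N β i}

/-- The macroscopic site `i` belongs to an infinite cluster of good boxes. -/
def InInfiniteGoodCluster {d : ℕ} (ω : Config d) (N : ℕ) (β : ℝ) (i : V d) : Prop :=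
  IsGoodBox ω N β i ∧ {j | SiteConnectedIn (goodSites ω N β) i j}.Infinite

/-- The union of the bad connected components (of the macroscopic site percolation)
meeting the set `Γ`; its size is `Σ_{C ∈ Bad, C ∩ Γ ≠ ∅} |C|`. -/
def badTouching {d : ℕ} (ω : Config d) (N : ℕ) (β : ℝ) (Γ : Set (V d)) : Set (V d) :=
  {j | ∃ i ∈ Γ, i ∉ goodSites ω N β ∧ SiteConnectedIn {k | k ∉ goodSites ω N β} i j}

/-!  ### Edges and sites of a path -/

/-- The set of edges of the path `f 0, …, f n`. -/
def pathEdges {d : ℕ} (n : ℕ) (f : ℕ → V d) : Set (Sym2 (V d)) :=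
  {e | ∃ i < n, e = s(f i, f (i + 1))}

/-- The set of vertices of the path `f 0, …, f n`. -/
def pathVerts {d : ℕ} (n : ℕ) (f : ℕ → V d) : Set (V d) :=
  {v | ∃ i ≤ n, f i = v}

/-- The set of `ω`-closed edges of the path `f 0, …, f n`. -/
def closedEdges {d : ℕ} (ω : Config d) (n : ℕ) (f : ℕ → V d) : Set (Sym2 (V d)) :=
  {e | e ∈ pathEdges n f ∧ ¬ openE ω e}

/-- The set `Γ` of macroscopic sites whose `N`-box is visited by the path `f 0, …, f n`. -/
def visitedSites {d : ℕ} (N : ℕ) (n : ℕ) (f : ℕ → V d) : Set (V d) :=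
  {i | ∃ m ≤ n, f m ∈ macroBox N i}

/-!  ### Probability: i.i.d. Bernoulli bond percolation -/

/-- A family of i.i.d. Bernoulli bond percolation measures on the configurations:
`P p` is a probability measure under which the states of the edges are independent
Bernoulli variables of parameter `p`. -/
structure BernoulliFamily (d : ℕ) where
  P : ℝ → Measure (Config d)
  prob : ∀ p, IsProbabilityMeasure (P p)
  iid : ∀ p, 0 ≤ p → p ≤ 1 → ∀ (s : Finset (Edge d)) (f : Edge d → Bool),
    P p {ω : Config d | ∀ e ∈ s, ω e = f e}
      = ∏ e ∈ s, ENNReal.ofReal (if f e then p else 1 - p)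

/-- The critical parameter `p_c(d)` of the family. -/
noncomputable def pc {d : ℕ} (F : BernoulliFamily d) : ℝ :=
  sInf {p : ℝ | 0 ≤ p ∧ p ≤ 1 ∧ 0 < F.P p {ω : Config d | InInfiniteCluster ω 0}}

/-- `t` is the time constant of the percolation measure `P`: for every `x ∈ ℤ^d`,
`D^{𝒞}(0̃, ñx)/n → t x` almost surely. -/
def ASTimeConstant {d : ℕ} (P : Measure (Config d)) (t : V d → ℝ) : Prop :=
  ∀ x : V d, ∀ᵐ ω ∂P, Tendsto (fun n : ℕ => DReg ω ω 0 (n • x) / n) atTop (𝓝 (t x))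

/-!  ### Couplings -/

/-- Two-stage coupling configurations: each edge carries a pair `(V, Z)` of Booleans. -/
abbrev CConfig (d : ℕ) := Edge d → Bool × Bool

/-- The `q`-configuration of a coupled configuration: `e` is `q`-open iff `V e = 1`. -/
def cfgQ {d : ℕ} (u : CConfig d) : Config d := fun e => (u e).1

/-- The `p`-configuration of a coupled configuration: `e` is `p`-open iff `V e Z e = 1`. -/
def cfgP {d : ℕ} (u : CConfig d) : Config d := fun e => (u e).1 && (u e).2

/-- Two-stage coupling of the `p`- and `q`-percolations: on each edge, independently,
`V` is Bernoulli of parameter `q` and `Z` is an independent Bernoulli of parameter `p/q`. -/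
structure CouplingMeasure (d : ℕ) (p q : ℝ) where
  Q : Measure (CConfig d)
  prob : IsProbabilityMeasure Q
  iid : ∀ (s : Finset (Edge d)) (f : Edge d → Bool × Bool),
    Q {u : CConfig d | ∀ e ∈ s, u e = f e}
      = ∏ e ∈ s,
          (ENNReal.ofReal (if (f e).1 then q else 1 - q) *
            ENNReal.ofReal (if (f e).2 then p / q else 1 - p / q))

/-- Standard coupling: i.i.d. uniform variables on `[0,1]`, one for each edge. -/
structure UniformCoupling (d : ℕ) where
  Q : Measure (Edge d → ℝ)
  prob : IsProbabilityMeasure Q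
  iid : ∀ (s : Finset (Edge d)) (a : Edge d → ℝ), (∀ e ∈ s, 0 ≤ a e ∧ a e ≤ 1) →
    Q {u | ∀ e ∈ s, u e ≤ a e} = ∏ e ∈ s, ENNReal.ofReal (a e)

open Classical in
/-- The `p`-configuration of the standard coupling: `e` is `p`-open iff `U e ≤ p`. -/
noncomputable def cfgAt {d : ℕ} (u : Edge d → ℝ) (p : ℝ) : Config d :=
  fun e => if u e ≤ p then true else false

/-- The critical parameter `p_c(d)` read on the standard coupling. -/
noncomputable def pcU {d : ℕ} (U : UniformCoupling d) : ℝ :=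
  sInf {p : ℝ | 0 ≤ p ∧ p ≤ 1 ∧ 0 < U.Q {u | InInfiniteCluster (cfgAt u p) 0}}

open Classical in
/-- A deterministically chosen geodesic (open path of minimal length) from `x` to `y`
in the configuration `ω` (a trivial constant path if there is none). -/
noncomputable def geod {d : ℕ} (ω : Config d) (x y : V d) : ℕ × (ℕ → V d) :=
  if h : ∃ nf : ℕ × (ℕ → V d), IsOpenPath ω nf.1 nf.2 ∧ nf.2 0 = x ∧ nf.2 nf.1 = y ∧
      (nf.1 : ℝ≥0∞) = chemDist ω x y
  then h.choose else (0, fun _ => x)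

/-!  ### Norms on `ℝ^d` -/

/-- `f` is a norm on the Euclidean space `ℝ^d`. -/
def IsNorm {d : ℕ} (f : EuclideanSpace ℝ (Fin d) → ℝ) : Prop :=
  (∀ x, 0 ≤ f x) ∧ (∀ x, f x = 0 ↔ x = 0) ∧
  (∀ (c : ℝ) (x), f (c • x) = |c| * f x) ∧ ∀ x y, f (x + y) ≤ f x + f y

/-- The canonical embedding of `ℤ^d` into the Euclidean space `ℝ^d`. -/
noncomputable def toEuc {d : ℕ} (x : V d) : EuclideanSpace ℝ (Fin d) :=
  (WithLp.equiv 2 (Fin d → ℝ)).symm fun i => (x i : ℝ)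

/-- Property (1) of the path-modification lemma: the edges of `γ' \ γ` decompose as a
disjoint union of self-avoiding `p`-open paths intersecting `γ' ∩ γ` at their endpoints. -/
def DisjointPathDecomposition {d : ℕ} (ωp : Config d) (n : ℕ) (f : ℕ → V d)
    (n' : ℕ) (g : ℕ → V d) : Prop :=
  ∃ (K : ℕ) (m : ℕ → ℕ) (h : ℕ → ℕ → V d),
    (⋃ j ∈ Finset.range K, pathEdges (m j) (h j)) = pathEdges n' g \ pathEdges n f ∧
    (∀ j < K, IsOpenPath ωp (m j) (h j)) ∧
    (∀ j < K, ∀ a ≤ m j, ∀ b ≤ m j, h j a = h j b → a = b) ∧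
    (∀ j < K, ∀ l < K, j ≠ l → Disjoint (pathEdges (m j) (h j)) (pathEdges (m l) (h l))) ∧
    (∀ j < K, h j 0 ∈ pathVerts n f ∧ h j (m j) ∈ pathVerts n f) ∧
    (∀ j < K, ∀ a, 0 < a → a < m j → h j a ∉ pathVerts n f)

/-- The conclusion of the path-modification lemma, for the constant `ρ`:
any `q`-open path between well-connected points of `𝒞_p` can be turned into a `p`-open
path, the total length of the bypasses being controlled by the bad clusters met and the
number of `p`-closed edges. -/
def BypassProperty (d : ℕ) (ρ : ℕ) : Prop :=
  ∀ (N : ℕ), 1 ≤ N → ∀ (β : ℝ), 1 ≤ β → ∀ (ωp ωq : Config d),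
    (∀ e, ωp e = true → ωq e = true) →
    ∀ y z : V d, InInfiniteCluster ωp y → InInfiniteCluster ωp z →
    (∃ i, y ∈ macroBox N i ∧ InInfiniteGoodCluster ωp N β i) →
    (∃ i, z ∈ macroBox N i ∧ InInfiniteGoodCluster ωp N β i) →
    ∀ (n : ℕ) (f : ℕ → V d), IsOpenPath ωq n f → f 0 = y → f n = z →
    ∃ (n' : ℕ) (g : ℕ → V d), IsOpenPath ωp n' g ∧ g 0 = y ∧ g n' = z ∧
      DisjointPathDecomposition ωp n f n' g ∧
      eSize (pathEdges n' g \ pathEdges n f) ≤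
        ((ρ * N : ℕ) : ℝ≥0∞) *
          (eSize (badTouching ωp N β (visitedSites N n f)) + eSize (closedEdges ωp n f))

/-! Sample the path every `N` steps and replace each sample by the macroscopic site whose
centre is nearest to it (at `ℓ^∞`-distance at most `N`). Consecutive samples are at
`ℓ^∞`-distance at most `N`, so their sites have centres at distance at most `3N < 2(2N+1)`
and are `*`-neighbours; every vertex lies within `N - 1` of the last sample before it,
hence within `2N - 1 < 3N` of that sample's centre. There are `⌊n/N⌋ + 1` samples. -/

lemma abs_sub_le_dist1 {d : ℕ} (x y : V d) (l : Fin d) : |x l - y l| ≤ dist1 x y := by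
  rw [Int.abs_eq_natAbs, dist1]
  exact_mod_cast Finset.single_le_sum (f := fun i => (x i - y i).natAbs)
    (fun _ _ => Nat.zero_le _) (Finset.mem_univ l)

lemma IsLatticePath.abs_sub_coord_le {d n : ℕ} {f : ℕ → V d} (hf : IsLatticePath n f)
    {a b : ℕ} (hab : a ≤ b) (hb : b ≤ n) (l : Fin d) :
    |f b l - f a l| ≤ ((b - a : ℕ) : ℤ) := by
  induction b, hab using Nat.le_induction with
  | base => simp
  | succ b hab ih =>
    have hstep : |f (b + 1) l - f b l| ≤ 1 := by
      simpa [abs_sub_comm, hf b (by omega)] using abs_sub_le_dist1 (f b) (f (b + 1)) l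
    calc |f (b + 1) l - f a l| ≤ |f (b + 1) l - f b l| + |f b l - f a l| := abs_sub_le _ _ _
      _ ≤ 1 + ((b - a : ℕ) : ℤ) := add_le_add hstep (ih (by omega))
      _ = ((b + 1 - a : ℕ) : ℤ) := by omega

/-- The macroscopic site `i` whose centre `i(2N+1)` is nearest to `x`, coordinatewise. -/
def macroIndex {d : ℕ} (N : ℕ) (x : V d) : V d := fun l => (x l + N) / (2 * N + 1)

lemma abs_sub_center_macroIndex_le {d : ℕ} (N : ℕ) (x : V d) (l : Fin d) :
    |x l - center N (macroIndex N x) l| ≤ N := by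
  have hpos : (0 : ℤ) < 2 * N + 1 := by positivity
  have hdiv := Int.mul_ediv_add_emod (x l + N) (2 * N + 1)
  have hlo := Int.emod_nonneg (x l + N) hpos.ne'
  have hhi := Int.emod_lt_of_pos (x l + N) hpos
  simp only [center, macroIndex]
  rw [abs_le]
  constructor <;> nlinarith

lemma abs_macroIndex_sub_le_one {d : ℕ} (N : ℕ) {x y : V d} (l : Fin d)
    (hxy : |x l - y l| ≤ N) : |macroIndex N x l - macroIndex N y l| ≤ 1 := by
  have hx := abs_sub_center_macroIndex_le N x l
  have hy := abs_sub_center_macroIndex_le N y l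
  have hcenters : |macroIndex N x l - macroIndex N y l| * (2 * N + 1) ≤ 3 * N := by
    rw [← abs_of_pos (by positivity : (0 : ℤ) < 2 * N + 1), ← abs_mul]
    simp only [center] at hx hy
    rw [abs_le] at hx hy hxy ⊢
    constructor <;> nlinarith
  by_contra! h
  nlinarith

lemma mem_macroBox'_macroIndex {d : ℕ} {N : ℕ} {x z : V d}
    (hzx : ∀ l, |z l - x l| < 2 * N) : z ∈ macroBox' N (macroIndex N x) := by
  intro l
  have hx := abs_sub_center_macroIndex_le N x l
  have hz := hzx l
  rw [abs_le] at hx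
  rw [abs_lt] at hz
  push_cast
  constructor <;> linarith

theorem statement_6_general (d : ℕ) (N : ℕ) (hN : 1 ≤ N)
    (n : ℕ) (f : ℕ → V d) (hf : IsLatticePath n f) :
    ∃ (r : ℕ) (g : ℕ → V d), 1 ≤ r ∧
      (∀ k, k + 1 < r → ∀ l, |g (k + 1) l - g k l| ≤ 1) ∧
      (∀ m ≤ n, ∃ k < r, f m ∈ macroBox' N (g k)) ∧
      (r : ℝ) ≤ 1 + ((n : ℝ) + 1) / N := by
  refine ⟨n / N + 1, fun k => macroIndex N (f (k * N)), Nat.le_add_left 1 _, ?_, ?_, ?_⟩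
  · intro k hk l
    have hkN : (k + 1) * N ≤ n :=
      (Nat.mul_le_mul_right N (by omega)).trans (Nat.div_mul_le_self n N)
    apply abs_macroIndex_sub_le_one
    simpa [Nat.succ_mul] using hf.abs_sub_coord_le (Nat.mul_le_mul_right N k.le_succ) hkN l
  · intro m hm
    refine ⟨m / N, Nat.lt_succ_of_le (Nat.div_le_div_right hm),
      mem_macroBox'_macroIndex fun l => ?_⟩
    have hmod : m - m / N * N < N := by
      have hdiv := Nat.div_add_mod m N
      have := Nat.mod_lt m hN
      rw [mul_comm] at hdiv
      omega
    have := hf.abs_sub_coord_le (Nat.div_mul_le_self m N) hm l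
    omega
  · calc ((n / N + 1 : ℕ) : ℝ) ≤ n / N + 1 := by push_cast; gcongr; exact Nat.cast_div_le
      _ ≤ 1 + ((n : ℝ) + 1) / N := by rw [add_comm]; gcongr; linarith

/-- **Macroscopic covering path.**
For every lattice path `γ` of `ℤ^d` and every `N ≥ 1`, there is a `*`-connected
macroscopic path `Γ̃ = (i_1, …, i_r)` such that every vertex of `γ` lies in
`⋃_{i ∈ Γ̃} B'_N(i)` and `|Γ̃| ≤ 1 + (|γ| + 1)/N`. -/
theorem statement_6 (d : ℕ) (hd : 2 ≤ d) (N : ℕ) (hN : 1 ≤ N)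
    (n : ℕ) (f : ℕ → V d) (hf : IsLatticePath n f) :
    ∃ (r : ℕ) (g : ℕ → V d), 1 ≤ r ∧
      (∀ k, k + 1 < r → ∀ l, |g (k + 1) l - g k l| ≤ 1) ∧
      (∀ m ≤ n, ∃ k < r, f m ∈ macroBox' N (g k)) ∧
      (r : ℝ) ≤ 1 + ((n : ℝ) + 1) / N :=
  statement_6_general d N hN n f hf

end Perco
end

section
/- Let d ≥ 2, p_c(d) < p ≤ q and x ∈ ℤ^d. Under the two-stage coupling, let γ be a (deterministically chosen) geodesic from 0 to x in 𝒞_q on the event that 0 and x belong to 𝒞_q, and let γ_c be the set of p-closed edges of γ. Then for every δ > 0, ℙ( |γ_c| ≥ |γ| ((q−p)/q + δ) ) ≤ exp(−2δ²‖x‖₁). -/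
open MeasureTheory Filter Topology
open scoped ENNReal

/-!
Condition on the `q`-configuration. A geodesic `γ` of `𝒞_q` is `q`-open, so its `p`-closed
edges are exactly its edges with `Z = 0`. The `Z`'s are independent of the `V`'s, so given the
`q`-configuration they are still i.i.d. Bernoulli variables, with `P(Z = 0) = (q - p)/q`, on the
`|γ|` distinct edges of `γ`; Hoeffding's inequality bounds the conditional probability by
`exp(-2δ²|γ|) ≤ exp(-2δ²‖x‖₁)`. For this conditioning to make sense, `{0 ↔ x}` is split into the
countably many measurable classes on which the length and the set of all geodesics are fixed,
so that `geod` is constant on each class.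
-/

theorem Fin.clamp_of_le {i n : ℕ} (h : i ≤ n) : Fin.clamp i n = ⟨i, Nat.lt_succ_of_le h⟩ :=
  Fin.ext (by simp [h])

namespace MeasureTheory

theorem Measure.eq_infinitePi_of_measure_restrict_preimage_singleton {ι : Type*} {X : ι → Type*}
    [∀ i, MeasurableSpace (X i)] [∀ i, Countable (X i)] [∀ i, MeasurableSingletonClass (X i)]
    {μ : ∀ i, Measure (X i)} [∀ i, IsProbabilityMeasure (μ i)] {ν : Measure (Π i, X i)}
    [IsFiniteMeasure ν]
    (h : ∀ (s : Finset ι) (x : Π i : s, X i), ν (s.restrict ⁻¹' {x}) = ∏ i : s, μ i {x i}) :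
    ν = Measure.infinitePi μ := by
  refine IsProjectiveLimit.unique (fun s => ?_) (Measure.isProjectiveLimit_infinitePi μ)
  refine Measure.ext_iff_singleton.2 fun x => ?_
  rw [Measure.map_apply (Finset.measurable_restrict s) (measurableSet_singleton x), h,
    Measure.pi_singleton]

theorem measure_le_of_forall_measure_inter_le {Ω ι : Type*} [MeasurableSpace Ω]
    [Countable ι] {μ : Measure Ω} [IsProbabilityMeasure μ] {D : ι → Set Ω}
    (hD : ∀ i, MeasurableSet (D i)) (hdisj : Pairwise (Function.onFun Disjoint D)) {A : Set Ω}
    (hA : A ⊆ ⋃ i, D i) {B : ℝ≥0∞} (h : ∀ i, μ (D i ∩ A) ≤ μ (D i) * B) : μ A ≤ B :=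
  calc μ A ≤ μ (⋃ i, D i ∩ A) := measure_mono fun ω hω => by
        obtain ⟨i, hi⟩ := Set.mem_iUnion.1 (hA hω)
        exact Set.mem_iUnion.2 ⟨i, hi, hω⟩
    _ ≤ ∑' i, μ (D i ∩ A) := measure_iUnion_le _
    _ ≤ ∑' i, μ (D i) * B := ENNReal.tsum_le_tsum h
    _ = μ (⋃ i, D i) * B := by rw [ENNReal.tsum_mul_right, measure_iUnion hdisj hD]
    _ ≤ B := mul_le_of_le_one_left zero_le prob_le_one

end MeasureTheory

namespace ProbabilityTheory

open scoped NNReal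

section Product

variable {ι : Type*} {X Y : ι → Type*} [∀ i, MeasurableSpace (X i)] [∀ i, MeasurableSpace (Y i)]
  (μ : ∀ i, Measure (X i)) (ν : ∀ i, Measure (Y i))
  [∀ i, IsProbabilityMeasure (μ i)] [∀ i, IsProbabilityMeasure (ν i)]

lemma measure_infinitePi_prod_fst_snd_preimage_pi (s s' : Finset ι) {t : ∀ i, Set (X i)}
    {t' : ∀ i, Set (Y i)} (ht : ∀ i, MeasurableSet (t i)) (ht' : ∀ i, MeasurableSet (t' i)) :
    Measure.infinitePi (fun i => (μ i).prod (ν i))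
        ((fun ω i => (ω i).1) ⁻¹' (s : Set ι).pi t ∩ (fun ω i => (ω i).2) ⁻¹' (s' : Set ι).pi t')
      = (∏ i ∈ s, μ i (t i)) * ∏ i ∈ s', ν i (t' i) := by
  classical
  have hbox :
      (fun ω i => (ω i).1) ⁻¹' (s : Set ι).pi t ∩ (fun ω i => (ω i).2) ⁻¹' (s' : Set ι).pi t'
        = Set.pi ↑(s ∪ s') fun i =>
            (if i ∈ s then t i else Set.univ) ×ˢ (if i ∈ s' then t' i else Set.univ) := by
    ext ω
    simp only [Set.mem_inter_iff, Set.mem_preimage, Set.mem_pi, Finset.mem_coe, Set.mem_prod,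
      Finset.coe_union, Set.mem_union, Set.mem_ite_univ_right]
    grind
  rw [hbox, Measure.infinitePi_pi _ fun i _ =>
    MeasurableSet.prod (by split_ifs <;> simp [ht]) (by split_ifs <;> simp [ht'])]
  simp only [Measure.prod_prod, Finset.prod_mul_distrib]
  simp only [apply_ite, measure_univ, Finset.prod_ite_mem, Finset.union_inter_cancel_left,
    Finset.union_inter_cancel_right]

theorem indepFun_fst_snd_infinitePi :
    IndepFun (fun ω i => (ω i).1) (fun ω i => (ω i).2)
      (Measure.infinitePi fun i => (μ i).prod (ν i)) := by
  have hC : IsPiSystem (squareCylinders fun i => {s : Set (X i) | MeasurableSet s}) :=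
    isPiSystem_squareCylinders (fun _ => MeasurableSpace.isPiSystem_measurableSet) (by simp)
  have hC' : IsPiSystem (squareCylinders fun i => {s : Set (Y i) | MeasurableSet s}) :=
    isPiSystem_squareCylinders (fun _ => MeasurableSpace.isPiSystem_measurableSet) (by simp)
  refine IndepSets.indep (Measurable.comap_le (by fun_prop)) (Measurable.comap_le (by fun_prop))
    (hC.comap fun ω i => (ω i).1) (hC'.comap fun ω i => (ω i).2)
    (by rw [← generateFrom_squareCylinders, MeasurableSpace.comap_generateFrom]; rfl)
    (by rw [← generateFrom_squareCylinders, MeasurableSpace.comap_generateFrom]; rfl) ?_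
  rw [IndepSets_iff]
  rintro - - ⟨-, ⟨s, t, ht, rfl⟩, rfl⟩ ⟨-, ⟨s', t', ht', rfl⟩, rfl⟩
  simp only [Set.mem_pi, Set.mem_univ, Set.mem_ofPred_eq, forall_const] at ht ht'
  have key := measure_infinitePi_prod_fst_snd_preimage_pi μ ν
  have h1 := key s s' ht (fun _ => .univ)
  have h2 := key s s' (fun _ => .univ) ht'
  simp only [Set.pi_univ, Set.preimage_univ, Set.inter_univ, Set.univ_inter, measure_univ,
    Finset.prod_const_one, mul_one, one_mul] at h1 h2
  rw [key s s' ht ht', h1, h2]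

end Product

theorem measure_infinitePi_card_filter_ge_le {ι α : Type*} [MeasurableSpace α] (μ : Measure α)
    [IsProbabilityMeasure μ] {S : Set α} [DecidablePred (· ∈ S)] (hS : MeasurableSet S)
    (E : Finset ι) {δ : ℝ} (hδ : 0 ≤ δ) :
    Measure.infinitePi (fun _ : ι => μ)
        {ω | (E.card : ℝ) * (μ.real S + δ) ≤ (E.filter fun i => ω i ∈ S).card}
      ≤ ENNReal.ofReal (Real.exp (-2 * δ ^ 2 * E.card)) := by
  set P := Measure.infinitePi fun _ : ι => μ
  have hf : Measurable (S.indicator (1 : α → ℝ)) := measurable_const.indicator hS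
  have hmean (i : ι) : P[fun ω => S.indicator 1 (ω i)] = μ.real S := by
    rw [← integral_map (measurable_pi_apply i).aemeasurable hf.aestronglyMeasurable,
      Measure.infinitePi_map_eval, integral_indicator_one hS]
  have hsubG (i : ι) :
      HasSubgaussianMGF (fun ω => S.indicator 1 (ω i) - μ.real S) (1 / 4) P := by
    have h := hasSubgaussianMGF_of_mem_Icc (X := fun ω => S.indicator 1 (ω i)) (a := 0) (b := 1)
      (hf.comp (measurable_pi_apply (X := fun _ : ι => α) i)).aemeasurable
      (ae_of_all P fun ω => by by_cases h : ω i ∈ S <;> simp [h])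
    rw [hmean i] at h
    convert h using 1
    ext; norm_num
  have hindep : iIndepFun (fun i ω => S.indicator 1 (ω i) - μ.real S) P :=
    iIndepFun_infinitePi (X := fun _ a => S.indicator 1 a - μ.real S) fun _ => hf.sub_const _
  have hsub : {ω : ι → α | (E.card : ℝ) * (μ.real S + δ) ≤ (E.filter fun i => ω i ∈ S).card}
      ⊆ {ω | E.card * δ ≤ ∑ i ∈ E, (S.indicator 1 (ω i) - μ.real S)} := by
    intro ω hω
    simp only [Set.mem_ofPred_eq, Finset.sum_sub_distrib, Finset.sum_const, nsmul_eq_mul,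
      Set.indicator_apply, Pi.one_apply, Finset.sum_boole] at hω ⊢
    linarith
  have hbound := HasSubgaussianMGF.measure_sum_ge_le_of_iIndepFun hindep (s := E)
    (fun i _ => hsubG i) (ε := E.card * δ) (by positivity)
  have hexp : -((E.card : ℝ) * δ) ^ 2 / (2 * ↑(∑ i ∈ E, (1 / 4 : ℝ≥0)))
      = -2 * δ ^ 2 * E.card := by
    simp only [Finset.sum_const, nsmul_eq_mul]
    push_cast
    rcases eq_or_ne (E.card : ℝ) 0 with h | h
    · simp [h]
    · field_simp; ring
  rw [hexp] at hbound
  calc P _ ≤ P {ω | E.card * δ ≤ ∑ i ∈ E, (S.indicator 1 (ω i) - μ.real S)} := measure_mono hsub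
    _ = ENNReal.ofReal (P.real _) := (ofReal_measureReal (measure_ne_top _ _)).symm
    _ ≤ _ := ENNReal.ofReal_le_ofReal hbound

lemma bernoulliMeasure_true_false_singleton {r : ℝ} (hr : r ∈ unitInterval) (b : Bool) :
    bernoulliMeasure true false ⟨r, hr⟩ {b} = ENNReal.ofReal (if b then r else 1 - r) := by
  cases b <;> simp [ENNReal.ofReal_eq_coe_nnreal hr.1, unitInterval.toNNReal,
    ENNReal.ofReal_eq_coe_nnreal (sub_nonneg.2 hr.2)] <;> rfl

end ProbabilityTheory

namespace Perco

open ProbabilityTheory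

variable {d : ℕ}

lemma dist1_comm (a b : V d) : dist1 a b = dist1 b a := by
  unfold dist1
  exact Finset.sum_congr rfl fun i _ => by rw [← Int.natAbs_neg, neg_sub]

lemma dist1_triangle (a b c : V d) : dist1 a c ≤ dist1 a b + dist1 b c := by
  unfold dist1
  rw [← Finset.sum_add_distrib]
  exact Finset.sum_le_sum fun i _ => by
    simpa using Int.natAbs_add_le (a i - b i) (b i - c i)

lemma natAbs_sub_le_dist1 (a b : V d) (k : Fin d) : (a k - b k).natAbs ≤ dist1 a b :=
  Finset.single_le_sum (f := fun k => (a k - b k).natAbs) (fun _ _ => Nat.zero_le _)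
    (Finset.mem_univ k)

lemma finite_setOf_dist1_le (a : V d) (n : ℕ) : {v : V d | dist1 a v ≤ n}.Finite := by
  refine (Set.Finite.pi fun k => Set.finite_Icc (a k - n) (a k + n)).subset fun v hv k _ => ?_
  have := (natAbs_sub_le_dist1 a v k).trans hv
  constructor <;> omega

section Paths

variable {ω : Config d} {n : ℕ} {f g : ℕ → V d}

lemma IsOpenPath.congr (h : IsOpenPath ω n f) (hfg : ∀ i ≤ n, f i = g i) : IsOpenPath ω n g :=
  fun i hi => by rw [← hfg i hi.le, ← hfg (i + 1) hi]; exact h i hi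

lemma IsOpenPath.dist1_le (h : IsOpenPath ω n f) {i : ℕ} (hi : i ≤ n) : dist1 (f 0) (f i) ≤ i := by
  induction i with
  | zero => simp [dist1]
  | succ k ih =>
    have hstep : dist1 (f k) (f (k + 1)) = 1 := (h k hi).1
    have := ih (by omega)
    have := dist1_triangle (f 0) (f k) (f (k + 1))
    omega

lemma IsOpenPath.shortcut (h : IsOpenPath ω n f) {i j : ℕ} (hij : i < j) (hjn : j ≤ n)
    (heq : f i = f j) :
    IsOpenPath ω (n - (j - i)) (fun k => if k ≤ i then f k else f (k + (j - i))) := by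
  intro k hk
  rcases lt_trichotomy k i with hki | rfl | hki
  · simpa [hki.le, Nat.succ_le_of_lt hki] using h k (by omega)
  · simpa [show k + 1 + (j - k) = j + 1 by omega, heq] using h j (by omega)
  · simpa [show ¬ k ≤ i by omega, show ¬ k + 1 ≤ i by omega,
      show k + 1 + (j - i) = k + (j - i) + 1 by omega] using h (k + (j - i)) (by omega)

end Paths

section Geodesics

variable {ω : Config d} {x y : V d} {n : ℕ} {f : ℕ → V d}

def pathLengths (ω : Config d) (x y : V d) : Set ℕ :=
  {n | ∃ f : ℕ → V d, IsOpenPath ω n f ∧ f 0 = x ∧ f n = y}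

lemma chemDist_eq_sInf (ω : Config d) (x y : V d) :
    chemDist ω x y = sInf ((↑) '' pathLengths ω x y) := by
  unfold chemDist pathLengths
  congr 1
  ext r
  simp only [Set.mem_ofPred_eq, Set.mem_image]
  grind

lemma chemDist_eq_natCast_iff : chemDist ω x y = n ↔ IsLeast (pathLengths ω x y) n := by
  have key {m : ℕ} (hm : IsLeast (pathLengths ω x y) m) : chemDist ω x y = m := by
    rw [chemDist_eq_sInf]
    refine IsLeast.csInf_eq ⟨Set.mem_image_of_mem _ hm.1, ?_⟩
    rintro _ ⟨k, hk, rfl⟩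
    exact_mod_cast hm.2 hk
  refine ⟨fun h => ?_, key⟩
  rcases (pathLengths ω x y).eq_empty_or_nonempty with he | hne
  · simp [chemDist_eq_sInf, he] at h
  · have hm := key ⟨Nat.sInf_mem hne, fun k hk => Nat.sInf_le hk⟩
    rw [h, Nat.cast_inj] at hm
    exact hm ▸ ⟨Nat.sInf_mem hne, fun k hk => Nat.sInf_le hk⟩

lemma Connected.exists_isLeast (h : Connected ω x y) : ∃ n, IsLeast (pathLengths ω x y) n := by
  rcases (pathLengths ω x y).eq_empty_or_nonempty with he | hne
  · exact absurd (by simp [chemDist_eq_sInf, he]) h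
  · exact ⟨_, Nat.sInf_mem hne, fun k hk => Nat.sInf_le hk⟩

/-- `geod ω x y` is chosen among the pairs `(n, f)` satisfying this predicate. -/
def IsGeodesic (ω : Config d) (x y : V d) (n : ℕ) (f : ℕ → V d) : Prop :=
  IsOpenPath ω n f ∧ f 0 = x ∧ f n = y ∧ (n : ℝ≥0∞) = chemDist ω x y

lemma isGeodesic_geod (h : Connected ω x y) :
    IsGeodesic ω x y (geod ω x y).1 (geod ω x y).2 := by
  have hex : ∃ nf : ℕ × (ℕ → V d), IsGeodesic ω x y nf.1 nf.2 := by
    obtain ⟨n, hn⟩ := h.exists_isLeast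
    obtain ⟨f, hf⟩ := hn.1
    exact ⟨(n, f), hf.1, hf.2.1, hf.2.2, (chemDist_eq_natCast_iff.2 hn).symm⟩
  rw [show geod ω x y = hex.choose from dif_pos hex]
  exact hex.choose_spec

open Classical in
lemma geod_congr {ω' : Config d} (h : ∀ n f, IsGeodesic ω x y n f ↔ IsGeodesic ω' x y n f) :
    geod ω x y = geod ω' x y := by
  have : (fun nf : ℕ × (ℕ → V d) => IsGeodesic ω x y nf.1 nf.2)
      = fun nf => IsGeodesic ω' x y nf.1 nf.2 := funext fun nf => propext (h nf.1 nf.2)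
  have key : ∀ P Q : ℕ × (ℕ → V d) → Prop, P = Q →
      (if h : ∃ nf, P nf then h.choose else (0, fun _ => x))
        = (if h : ∃ nf, Q nf then h.choose else (0, fun _ => x)) := by
    rintro P Q rfl; rfl
  exact key _ _ this

lemma IsGeodesic.le_of_mem (h : IsGeodesic ω x y n f) {m : ℕ} (hm : m ∈ pathLengths ω x y) :
    n ≤ m :=
  (chemDist_eq_natCast_iff.1 h.2.2.2.symm).2 hm

lemma IsGeodesic.injOn (h : IsGeodesic ω x y n f) : Set.InjOn f (Set.Iic n) := by
  intro i (hi : i ≤ n) j (hj : j ≤ n) heq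
  wlog hij : i < j generalizing i j
  · rcases (not_lt.1 hij).eq_or_lt with h' | h'
    · exact h'.symm
    · exact (this hj hi heq.symm h').symm
  have hlen := h.le_of_mem ⟨_, h.1.shortcut hij hj heq, by simpa using h.2.1, ?_⟩
  · omega
  · by_cases hjn : j = n
    · rw [if_pos (by omega), show n - (j - i) = i by omega, heq, hjn, h.2.2.1]
    · rw [if_neg (by omega), show n - (j - i) + (j - i) = n by omega, h.2.2.1]

lemma IsGeodesic.edge_injOn (h : IsGeodesic ω x y n f) :
    Set.InjOn (fun i => s(f i, f (i + 1))) (Set.Iio n) := by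
  intro i (hi : i < n) j (hj : j < n) heq
  rcases Sym2.eq_iff.1 heq with ⟨h1, -⟩ | ⟨h1, h2⟩
  · exact h.injOn hi.le hj.le h1
  · have := h.injOn (x₁ := i) hi.le (show j + 1 ≤ n by omega) h1
    have := h.injOn (x₁ := i + 1) (show i + 1 ≤ n by omega) hj.le h2
    omega

end Geodesics

section Traces

variable {ω : Config d} {x y : V d} {n : ℕ}

/-- The open paths of length `n` from `x` to `y`, recorded by their `n + 1` vertices. -/
def pathTraces (ω : Config d) (x y : V d) (n : ℕ) : Set (Fin (n + 1) → V d) :=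
  {g | IsOpenPath ω n (fun i => g (Fin.clamp i n)) ∧ g 0 = x ∧ g (Fin.last n) = y}

lemma mem_pathTraces_iff {f : ℕ → V d} :
    (fun i : Fin (n + 1) => f i) ∈ pathTraces ω x y n ↔ IsOpenPath ω n f ∧ f 0 = x ∧ f n = y := by
  have hf : ∀ i ≤ n, f (Fin.clamp i n) = f i := fun i hi => by rw [Fin.clamp_of_le hi]
  refine ⟨fun ⟨h, h0, hn⟩ => ⟨h.congr hf, h0, by simpa using hn⟩,
    fun ⟨h, h0, hn⟩ => ⟨h.congr fun i hi => (hf i hi).symm, h0, by simpa using hn⟩⟩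

lemma mem_pathLengths_iff : n ∈ pathLengths ω x y ↔ ∃ g, g ∈ pathTraces ω x y n := by
  refine ⟨fun ⟨f, hf⟩ => ⟨_, mem_pathTraces_iff.2 hf⟩, fun ⟨g, hg⟩ => ?_⟩
  have : (fun i : Fin (n + 1) => g (Fin.clamp i n)) = g := funext fun i => by
    rw [Fin.clamp_of_le i.is_le]
  exact ⟨_, (mem_pathTraces_iff (f := fun i => g (Fin.clamp i n))).1 (by rwa [this])⟩

lemma pathTraces_finite (ω : Config d) (x y : V d) (n : ℕ) : (pathTraces ω x y n).Finite := by
  refine (Set.Finite.pi fun _ => finite_setOf_dist1_le x n).subset fun g ⟨h, h0, _⟩ i _ => ?_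
  have := h.dist1_le i.is_le
  rw [Fin.clamp_of_le (Nat.zero_le n), Fin.clamp_of_le i.is_le, Fin.zero_eta, Fin.eta, h0] at this
  exact this.trans i.is_le

lemma measurable_edgeOpen (a b : V d) : Measurable fun ω : Config d => edgeOpen ω a b :=
  Measurable.exists fun _ => measurableSet_setOfPred.1
    (measurableSet_eq_fun (measurable_pi_apply _) measurable_const)

lemma measurable_isOpenPath (n : ℕ) (f : ℕ → V d) :
    Measurable fun ω : Config d => IsOpenPath ω n f :=
  Measurable.forall fun _ => measurable_const.imp (measurable_edgeOpen _ _)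

lemma measurable_mem_pathTraces (x y : V d) (n : ℕ) (g : Fin (n + 1) → V d) :
    Measurable fun ω : Config d => g ∈ pathTraces ω x y n :=
  (measurable_isOpenPath _ _).and measurable_const

lemma measurable_mem_pathLengths (x y : V d) (n : ℕ) :
    Measurable fun ω : Config d => n ∈ pathLengths ω x y := by
  simp_rw [mem_pathLengths_iff]
  exact Measurable.exists fun g => measurable_mem_pathTraces x y n g

lemma measurable_chemDist_eq (x y : V d) (n : ℕ) :
    Measurable fun ω : Config d => chemDist ω x y = n := by
  simp_rw [chemDist_eq_natCast_iff, IsLeast, lowerBounds, Set.mem_ofPred_eq]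
  exact (measurable_mem_pathLengths x y n).and
    (Measurable.forall fun m => (measurable_mem_pathLengths x y m).imp measurable_const)

end Traces

def geodClass (x y : V d) (n : ℕ) (S : Finset (Fin (n + 1) → V d)) : Set (Config d) :=
  {ω | chemDist ω x y = n ∧ pathTraces ω x y n = S}

section GeodClass

variable {x y : V d} {n : ℕ} {S : Finset (Fin (n + 1) → V d)} {ω : Config d}

lemma measurableSet_geodClass (x y : V d) (n : ℕ) (S : Finset (Fin (n + 1) → V d)) :
    MeasurableSet (geodClass x y n S) := by
  refine measurableSet_setOfPred.2 ((measurable_chemDist_eq x y n).and ?_)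
  simp_rw [Set.ext_iff]
  exact Measurable.forall fun g => (measurable_mem_pathTraces x y n g).iff measurable_const

lemma pairwise_disjoint_geodClass (x y : V d) :
    Pairwise (Function.onFun Disjoint fun σ : Σ n, Finset (Fin (n + 1) → V d) =>
      geodClass x y σ.1 σ.2) := by
  rintro ⟨n, S⟩ ⟨m, T⟩ hne
  refine Set.disjoint_left.2 fun ω ⟨hn, hS⟩ ⟨hm, hT⟩ => hne ?_
  obtain rfl : n = m := by exact_mod_cast hn.symm.trans hm
  simp only at hS hT
  rw [Finset.coe_injective (hS.symm.trans hT)]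

lemma Connected.exists_mem_geodClass (h : Connected ω x y) :
    ∃ σ : Σ n, Finset (Fin (n + 1) → V d), ω ∈ geodClass x y σ.1 σ.2 := by
  obtain ⟨n, hn⟩ := h.exists_isLeast
  exact ⟨⟨n, (pathTraces_finite ω x y n).toFinset⟩, chemDist_eq_natCast_iff.2 hn, by simp⟩

lemma isGeodesic_iff_of_mem_geodClass (hω : ω ∈ geodClass x y n S) {m : ℕ} {f : ℕ → V d} :
    IsGeodesic ω x y m f ↔ m = n ∧ (fun i : Fin (n + 1) => f i) ∈ S := by
  rw [IsGeodesic, hω.1, Nat.cast_inj, ← Finset.mem_coe, ← hω.2]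
  constructor
  · rintro ⟨h, h0, hm, rfl⟩
    exact ⟨rfl, mem_pathTraces_iff.2 ⟨h, h0, hm⟩⟩
  · rintro ⟨rfl, hf⟩
    obtain ⟨h, h0, hm⟩ := mem_pathTraces_iff.1 hf
    exact ⟨h, h0, hm, rfl⟩

lemma geod_eq_of_mem_geodClass {ω' : Config d} (hω : ω ∈ geodClass x y n S)
    (hω' : ω' ∈ geodClass x y n S) : geod ω x y = geod ω' x y :=
  geod_congr fun _ _ => by
    rw [isGeodesic_iff_of_mem_geodClass hω, isGeodesic_iff_of_mem_geodClass hω']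

end GeodClass

section Coupling

variable {p q : ℝ}

lemma measurable_cfgQ : Measurable (cfgQ : CConfig d → Config d) :=
  measurable_pi_lambda _ fun e => (measurable_pi_apply e).fst

/-- The law of the pair `(V e, Z e)` of a single edge. -/
noncomputable def couplingLaw (a b : unitInterval) : Measure (Bool × Bool) :=
  (bernoulliMeasure true false a).prod (bernoulliMeasure true false b)

instance (a b : unitInterval) : IsProbabilityMeasure (couplingLaw a b) := by
  unfold couplingLaw; infer_instance

lemma CouplingMeasure.Q_eq_infinitePi (cpl : CouplingMeasure d p q) (hq : q ∈ unitInterval)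
    (hpq : p / q ∈ unitInterval) :
    cpl.Q = Measure.infinitePi fun _ => couplingLaw ⟨q, hq⟩ ⟨p / q, hpq⟩ := by
  classical
  have := cpl.prob
  refine Measure.eq_infinitePi_of_measure_restrict_preimage_singleton fun s x => ?_
  let f (e : Edge d) : Bool × Bool := if h : e ∈ s then x ⟨e, h⟩ else default
  have hcyl : (s.restrict : CConfig d → (s → Bool × Bool)) ⁻¹' {x}
      = {u : CConfig d | ∀ e ∈ s, u e = f e} := by
    ext u
    simp only [Set.mem_preimage, Set.mem_singleton_iff, funext_iff, Finset.restrict,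
      Subtype.forall, Set.mem_ofPred_eq, f]
    exact forall₂_congr fun e he => by rw [dif_pos he]
  rw [hcyl, cpl.iid, ← Finset.prod_coe_sort s]
  refine Finset.prod_congr rfl fun e _ => ?_
  rw [couplingLaw, ← Set.singleton_prod_singleton, Measure.prod_prod,
    bernoulliMeasure_true_false_singleton, bernoulliMeasure_true_false_singleton]
  simp [f, e.2]

lemma couplingLaw_real_snd_eq_false {a : unitInterval} {r : ℝ} (hr : r ∈ unitInterval) :
    (couplingLaw a ⟨r, hr⟩).real {b | b.2 = false} = 1 - r := by
  have : {b : Bool × Bool | b.2 = false} = Set.univ ×ˢ {false} := by ext; simp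
  rw [measureReal_def, this, couplingLaw, Measure.prod_prod, measure_univ, one_mul,
    bernoulliMeasure_true_false_singleton]
  exact ENNReal.toReal_ofReal (sub_nonneg.2 hr.2)

lemma measurableSet_setOf_le_card_filter (E : Finset (Edge d)) (c : ℝ) :
    MeasurableSet {z : Config d | c ≤ (E.filter fun e => z e = false).card} := by
  refine measurableSet_le measurable_const (measurable_from_top.comp ?_)
  simp_rw [Finset.card_filter]
  exact Finset.measurable_sum _ fun e _ => Measurable.ite
    (measurableSet_eq_fun (measurable_pi_apply e) measurable_const) measurable_const
    measurable_const

lemma CouplingMeasure.measure_inter_card_ge_le (cpl : CouplingMeasure d p q)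
    (hq : q ∈ unitInterval) (hpq : p / q ∈ unitInterval) {T : Set (Config d)}
    (hT : MeasurableSet T) (E : Finset (Edge d)) {δ : ℝ} (hδ : 0 ≤ δ) :
    cpl.Q (cfgQ ⁻¹' T ∩
        {u | (E.card : ℝ) * (1 - p / q + δ) ≤ (E.filter fun e => (u e).2 = false).card})
      ≤ cpl.Q (cfgQ ⁻¹' T) * ENNReal.ofReal (Real.exp (-2 * δ ^ 2 * E.card)) := by
  have hindep := indepFun_fst_snd_infinitePi (ι := Edge d)
    (fun _ => bernoulliMeasure true false ⟨q, hq⟩)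
    (fun _ => bernoulliMeasure true false ⟨p / q, hpq⟩)
  have hZ := measure_infinitePi_card_filter_ge_le (couplingLaw ⟨q, hq⟩ ⟨p / q, hpq⟩)
    (S := {b | b.2 = false}) (measurableSet_eq_fun measurable_snd measurable_const) E hδ
  rw [couplingLaw_real_snd_eq_false] at hZ
  rw [cpl.Q_eq_infinitePi hq hpq]
  exact (hindep.measure_inter_preimage_eq_mul _ _ hT
    (measurableSet_setOf_le_card_filter E _)).trans_le (mul_le_mul_right hZ _)

lemma IsGeodesic.exists_finset_closedEdges {ω : Config d} {x y : V d} {n : ℕ} {f : ℕ → V d}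
    (h : IsGeodesic ω x y n f) :
    ∃ E : Finset (Edge d), E.card = n ∧ ∀ u : CConfig d, IsOpenPath (cfgQ u) n f →
      (closedEdges (cfgP u) n f).ncard ≤ (E.filter fun e => (u e).2 = false).card := by
  classical
  let edge (i : Fin n) : Edge d := ⟨s(f i, f (i + 1)), (h.1 i i.2).1⟩
  have hinj : Function.Injective edge := fun i j hij =>
    Fin.ext (h.edge_injOn i.2 j.2 (congrArg Subtype.val hij))
  refine ⟨Finset.univ.image edge, by simp [Finset.card_image_of_injective _ hinj], fun u hu => ?_⟩
  set F := (Finset.univ.image edge).filter fun e => (u e).2 = false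
  have hsub : closedEdges (cfgP u) n f ⊆ Subtype.val '' (F : Set (Edge d)) := by
    rintro _ ⟨⟨i, hi, rfl⟩, hclosed⟩
    refine ⟨edge ⟨i, hi⟩, ?_, rfl⟩
    simp only [F, Finset.coe_filter, Finset.mem_image, Finset.mem_univ, true_and]
    refine ⟨⟨_, rfl⟩, ?_⟩
    -- a `q`-open edge with `Z = 1` would be `p`-open
    cases hz : (u (edge ⟨i, hi⟩)).2
    · rfl
    · have hv : (u (edge ⟨i, hi⟩)).1 = true := (hu i hi).2
      exact absurd ⟨(h.1 i hi).1, show ((u (edge ⟨i, hi⟩)).1 && _) = true by rw [hv, hz]; rfl⟩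
        hclosed
  calc _ ≤ (Subtype.val '' (F : Set (Edge d))).ncard :=
        Set.ncard_le_ncard hsub ((Finset.finite_toSet F).image _)
    _ ≤ F.card := (Set.ncard_image_le (Finset.finite_toSet _)).trans (Set.ncard_coe_finset _).le

lemma CouplingMeasure.measure_geodClass_inter_le (cpl : CouplingMeasure d p q) (hq0 : q ≠ 0)
    (hq : q ∈ unitInterval) (hpq : p / q ∈ unitInterval) (x y : V d) {δ : ℝ} (hδ : 0 ≤ δ)
    (n : ℕ) (S : Finset (Fin (n + 1) → V d)) :
    cpl.Q (cfgQ ⁻¹' geodClass x y n S ∩ {u | ((geod (cfgQ u) x y).1 : ℝ) * ((q - p) / q + δ) ≤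
        (closedEdges (cfgP u) (geod (cfgQ u) x y).1 (geod (cfgQ u) x y).2).ncard})
      ≤ cpl.Q (cfgQ ⁻¹' geodClass x y n S) *
          ENNReal.ofReal (Real.exp (-2 * δ ^ 2 * dist1 x y)) := by
  rcases (geodClass x y n S).eq_empty_or_nonempty with hempty | ⟨ω₀, hω₀⟩
  · simp [hempty]
  have hgeod := isGeodesic_geod (x := x) (y := y) (ω := ω₀) (by simp [Connected, hω₀.1])
  obtain ⟨E, hcard, hclosed⟩ := hgeod.exists_finset_closedEdges
  have hdist : (dist1 x y : ℝ) ≤ E.card := by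
    have := hgeod.1.dist1_le le_rfl
    rw [hgeod.2.1, hgeod.2.2.1] at this
    exact_mod_cast hcard ▸ this
  have hfrac : (q - p) / q = 1 - p / q := by field_simp
  calc _ ≤ cpl.Q (cfgQ ⁻¹' geodClass x y n S ∩
        {u | (E.card : ℝ) * (1 - p / q + δ) ≤ (E.filter fun e => (u e).2 = false).card}) := by
        refine measure_mono fun u ⟨hu, hbad⟩ => ⟨hu, ?_⟩
        rw [Set.mem_ofPred_eq, geod_eq_of_mem_geodClass hu hω₀] at hbad
        have hopen : IsOpenPath (cfgQ u) _ _ := ((isGeodesic_iff_of_mem_geodClass hu).2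
          ((isGeodesic_iff_of_mem_geodClass hω₀).1 hgeod)).1
        rw [Set.mem_ofPred_eq, hcard, ← hfrac]
        exact hbad.trans (by exact_mod_cast hclosed u hopen)
    _ ≤ _ := cpl.measure_inter_card_ge_le hq hpq (measurableSet_geodClass x y n S) E hδ
    _ ≤ _ := by
      refine mul_le_mul_right (ENNReal.ofReal_le_ofReal (Real.exp_le_exp.2 ?_)) _
      nlinarith [mul_le_mul_of_nonneg_left hdist (sq_nonneg δ)]

end Coupling

theorem statement_13_general (d : ℕ) (F : BernoulliFamily d)
    (p q : ℝ) (hp : pc F < p) (hpq : p ≤ q) (hq : q ≤ 1)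
    (cpl : CouplingMeasure d p q) (x : V d) (δ : ℝ) (hδ : 0 < δ) :
    cpl.Q {u : CConfig d |
        InInfiniteCluster (cfgQ u) 0 ∧ InInfiniteCluster (cfgQ u) x ∧
        Connected (cfgQ u) 0 x ∧
        ((geod (cfgQ u) 0 x).1 : ℝ) * ((q - p) / q + δ) ≤
          ((closedEdges (cfgP u) (geod (cfgQ u) 0 x).1 (geod (cfgQ u) 0 x).2).ncard : ℝ)}
      ≤ ENNReal.ofReal (Real.exp (-2 * δ ^ 2 * norm1 x)) := by
  have hp0 : 0 < p := (Real.sInf_nonneg fun _ hr => hr.1).trans_lt hp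
  have hq0 : 0 < q := hp0.trans_le hpq
  have := cpl.prob
  refine measure_le_of_forall_measure_inter_le
    (D := fun σ : Σ n, Finset (Fin (n + 1) → V d) => cfgQ ⁻¹' geodClass 0 x σ.1 σ.2)
    (fun σ => measurable_cfgQ (measurableSet_geodClass 0 x σ.1 σ.2))
    ((pairwise_disjoint_geodClass 0 x).mono fun _ _ h => h.preimage cfgQ)
    (fun u hu => Set.mem_iUnion.2 hu.2.2.1.exists_mem_geodClass) fun σ => ?_
  calc _ ≤ _ := measure_mono (Set.inter_subset_inter_right _ fun u hu => hu.2.2.2)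
    _ ≤ _ := cpl.measure_geodClass_inter_le hq0.ne' ⟨hq0.le, hq⟩
          ⟨div_nonneg hp0.le hq0.le, div_le_one_of_le₀ hpq hq0.le⟩ 0 x hδ.le σ.1 σ.2
    _ = _ := by rw [norm1, dist1_comm]

/-- **Chernoff bound for the number of `p`-closed edges of a geodesic.**
Under the two-stage coupling, if `γ` is a deterministically chosen geodesic from `0` to
`x` in `𝒞_q` and `γ_c` is its set of `p`-closed edges, then for every `δ > 0`,
`ℙ(|γ_c| ≥ |γ|((q-p)/q + δ)) ≤ exp(-2δ²‖x‖₁)`. -/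
theorem statement_13 (d : ℕ) (hd : 2 ≤ d) (F : BernoulliFamily d)
    (p q : ℝ) (hp : pc F < p) (hpq : p ≤ q) (hq : q ≤ 1)
    (cpl : CouplingMeasure d p q) (x : V d) (δ : ℝ) (hδ : 0 < δ) :
    cpl.Q {u : CConfig d |
        InInfiniteCluster (cfgQ u) 0 ∧ InInfiniteCluster (cfgQ u) x ∧
        Connected (cfgQ u) 0 x ∧
        ((geod (cfgQ u) 0 x).1 : ℝ) * ((q - p) / q + δ) ≤
          ((closedEdges (cfgP u) (geod (cfgQ u) 0 x).1 (geod (cfgQ u) 0 x).2).ncard : ℝ)}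
      ≤ ENNReal.ofReal (Real.exp (-2 * δ ^ 2 * norm1 x)) :=
  statement_13_general d F p q hp hpq hq cpl x δ hδ

end Perco
end

section
/- For every integer r ≥ 3, every integer N ≥ 1 and every real z > 0 such that ez(1 + r/N) < 1, one has Σ_{j=N}^{∞} z^j · binom(r + j − 1, j) ≤ (e/(2π)) · (ez(1 + r/N))^N / (1 − ez(1 + r/N)), where e is Euler's number and binom denotes the binomial coefficient. -/
open MeasureTheory Filter Topology
open scoped ENNReal

namespace Perco

set_option maxHeartbeats 1000000 in
private lemma key_choose_bound (r N : ℕ) (hr : 3 ≤ r) (hN : 1 ≤ N) :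
    ∀ k, N ≤ k → ((r + k - 1).choose k : ℝ) ≤
      Real.exp 1 / (2 * Real.pi) * (Real.exp 1 * (1 + (r : ℝ) / N)) ^ k := by
  set e1 := Real.exp 1 with he1
  have hNR : (1:ℝ) ≤ (N:ℝ) := by exact_mod_cast hN
  have hN0 : (0:ℝ) < (N:ℝ) := by linarith
  have hrR : (3:ℝ) ≤ (r:ℝ) := by exact_mod_cast hr
  have he1pos : (0:ℝ) < e1 := Real.exp_pos 1
  have he1ge : (2.7182818283:ℝ) < e1 := Real.exp_one_gt_d9
  have hpi : (0:ℝ) < Real.pi := Real.pi_pos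
  have hpilt : Real.pi < 3.15 := by
    have := Real.pi_lt_d2
    norm_num at this ⊢
    linarith
  set B : ℝ := e1 * (1 + (r:ℝ)/N) with hB
  have hfrac : (0:ℝ) < 1 + (r:ℝ)/N := by positivity
  have hBpos : 0 < B := by positivity
  have hBge : 1 + (r:ℝ)/N ≤ B := by nlinarith [hfrac, he1ge]
  show ∀ k, N ≤ k → ((r + k - 1).choose k : ℝ) ≤ e1/(2*Real.pi) * B ^ k
  intro k hk
  induction k, hk using Nat.le_induction with
  | base =>
    have hst : Real.sqrt Real.pi ≤ Stirling.stirlingSeq N := by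
      obtain ⟨N', rfl⟩ : ∃ N', N = N' + 1 := ⟨N - 1, by omega⟩
      have h3 : Tendsto (Stirling.stirlingSeq ∘ Nat.succ) atTop (𝓝 (Real.sqrt Real.pi)) :=
        Stirling.tendsto_stirlingSeq_sqrt_pi.comp (tendsto_add_atTop_nat 1)
      exact Stirling.stirlingSeq'_antitone.le_of_tendsto h3 N'
    have hden : (0:ℝ) < Real.sqrt (2*N) * ((N:ℝ)/e1) ^ N := by positivity
    have hfac : Real.sqrt Real.pi * (Real.sqrt (2*N) * ((N:ℝ)/e1) ^ N) ≤ (N.factorial : ℝ) := by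
      rw [Stirling.stirlingSeq] at hst
      calc Real.sqrt Real.pi * (Real.sqrt (2*N) * ((N:ℝ)/e1) ^ N)
          ≤ ((N.factorial : ℝ) / (Real.sqrt (2*N) * ((N:ℝ)/e1) ^ N)) *
            (Real.sqrt (2*N) * ((N:ℝ)/e1) ^ N) :=
            mul_le_mul_of_nonneg_right hst hden.le
        _ = (N.factorial : ℝ) := by field_simp
    have hc : ((r + N - 1).choose N : ℝ) ≤ ((r + N - 1 : ℕ) : ℝ) ^ N / (N.factorial : ℝ) :=
      Nat.choose_le_pow_div N (r + N - 1)
    have hcast : ((r + N - 1 : ℕ) : ℝ) = (r:ℝ) + N - 1 := by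
      have h1 : 1 ≤ r + N := by omega
      push_cast [h1]; ring
    have hfacpos : (0:ℝ) < (N.factorial : ℝ) := by exact_mod_cast Nat.factorial_pos N
    have h1 : ((r + N - 1 : ℕ) : ℝ) ^ N ≤ ((1 + (r:ℝ)/N) * N) ^ N := by
      apply pow_le_pow_left₀ (by rw [hcast]; linarith)
      rw [hcast]; field_simp; linarith
    have hsqrt2 : Real.sqrt 2 ≤ Real.sqrt (2*N) := by
      apply Real.sqrt_le_sqrt; nlinarith
    have hnum : 2 * Real.pi ≤ e1 * (Real.sqrt Real.pi * Real.sqrt (2*N)) := by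
      have h2pi : Real.sqrt Real.pi * Real.sqrt 2 = Real.sqrt (2*Real.pi) := by
        rw [← Real.sqrt_mul hpi.le]; ring_nf
      have hle : Real.sqrt (2*Real.pi) ≤ e1 := by
        rw [show e1 = Real.sqrt (e1^2) from (Real.sqrt_sq he1pos.le).symm]
        apply Real.sqrt_le_sqrt; nlinarith
      have hsp : (0:ℝ) ≤ Real.sqrt Real.pi := Real.sqrt_nonneg _
      have hsq : Real.sqrt (2*Real.pi) ^ 2 = 2*Real.pi := Real.sq_sqrt (by positivity)
      calc 2*Real.pi = Real.sqrt (2*Real.pi) * Real.sqrt (2*Real.pi) := by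
            rw [← pow_two, hsq]
        _ ≤ e1 * (Real.sqrt Real.pi * Real.sqrt 2) := by
            rw [h2pi]; exact mul_le_mul_of_nonneg_right hle (Real.sqrt_nonneg _)
        _ ≤ e1 * (Real.sqrt Real.pi * Real.sqrt (2*N)) := by
            exact mul_le_mul_of_nonneg_left
              (mul_le_mul_of_nonneg_left hsqrt2 hsp) he1pos.le
    have hBpow : ((1 + (r:ℝ)/N) * N) ^ N / (Real.sqrt Real.pi * (Real.sqrt (2*N) * ((N:ℝ)/e1)^N))
        = B ^ N / (Real.sqrt Real.pi * Real.sqrt (2*N)) := by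
      rw [hB, mul_pow, mul_pow, div_pow]
      field_simp
    have hlast : (1:ℝ)/(Real.sqrt Real.pi * Real.sqrt (2*N)) ≤ e1/(2*Real.pi) := by
      rw [div_le_div_iff₀ (by positivity) (by positivity)]
      nlinarith [hnum]
    calc ((r + N - 1).choose N : ℝ) ≤ ((r + N - 1 : ℕ) : ℝ) ^ N / (N.factorial : ℝ) := hc
      _ ≤ ((1 + (r:ℝ)/N) * N) ^ N / (N.factorial : ℝ) := by gcongr
      _ ≤ ((1 + (r:ℝ)/N) * N) ^ N / (Real.sqrt Real.pi * (Real.sqrt (2*N) * ((N:ℝ)/e1)^N)) :=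
          div_le_div_of_nonneg_left (by positivity) (by positivity) hfac
      _ = B ^ N / (Real.sqrt Real.pi * Real.sqrt (2*N)) := hBpow
      _ = B ^ N * ((1:ℝ)/(Real.sqrt Real.pi * Real.sqrt (2*N))) := by ring
      _ ≤ B ^ N * (e1/(2*Real.pi)) := mul_le_mul_of_nonneg_left hlast (by positivity)
      _ = e1/(2*Real.pi) * B ^ N := by ring
  | succ k hk ih =>
    obtain ⟨r', rfl⟩ : ∃ r', r = r' + 3 := ⟨r - 3, by omega⟩
    have hid : (r' + 3 + k) * ((r' + 3 + k - 1).choose k)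
        = ((r' + 3 + k).choose (k+1)) * (k+1) := by
      have h0 := Nat.add_one_mul_choose_eq (r' + k + 2) k
      have e1' : r' + 3 + k - 1 = r' + k + 2 := by omega
      have e2 : (r' + k + 2).succ = r' + 3 + k := by omega
      rw [e1', ← e2]
      exact h0
    have hidR : ((r':ℝ) + 3 + k) * ((r' + 3 + k - 1).choose k : ℝ)
        = ((r' + 3 + (k+1) - 1).choose (k+1) : ℝ) * ((k:ℝ)+1) := by
      have e3 : r' + 3 + (k+1) - 1 = r' + 3 + k := by omega
      rw [e3]
      exact_mod_cast hid
    have hkR : (N:ℝ) ≤ (k:ℝ) := by exact_mod_cast hk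
    have hk0 : (0:ℝ) < (k:ℝ) + 1 := by linarith
    have hratio : ((r':ℝ) + 3 + k) / ((k:ℝ)+1) ≤ 1 + ((r':ℝ)+3)/N := by
      have hAA : (r':ℝ)+3 ≤ ((r':ℝ)+3)*((k:ℝ)+1)/N := by
        rw [le_div_iff₀ hN0]
        nlinarith [mul_nonneg (show (0:ℝ) ≤ (r':ℝ)+3 by positivity)
          (show (0:ℝ) ≤ (k:ℝ)+1-N by linarith)]
      rw [div_le_iff₀ hk0]
      have hexp : (1 + ((r':ℝ)+3)/(N:ℝ)) * ((k:ℝ)+1)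
          = (k:ℝ)+1 + ((r':ℝ)+3)*((k:ℝ)+1)/(N:ℝ) := by field_simp
      rw [hexp]
      linarith
    have hCk : (0:ℝ) ≤ ((r' + 3 + k - 1).choose k : ℝ) := by positivity
    have hnew : ((r' + 3 + (k+1) - 1).choose (k+1) : ℝ)
        = ((r':ℝ) + 3 + k) / ((k:ℝ)+1) * ((r' + 3 + k - 1).choose k : ℝ) := by
      rw [eq_comm, div_mul_eq_mul_div, div_eq_iff hk0.ne']
      linarith [hidR]
    rw [hnew]
    calc ((r':ℝ) + 3 + k) / ((k:ℝ)+1) * ((r' + 3 + k - 1).choose k : ℝ)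
        ≤ (1 + ((r':ℝ)+3)/N) * (e1/(2*Real.pi) * B ^ k) :=
          mul_le_mul hratio ih hCk (by positivity)
      _ ≤ B * (e1/(2*Real.pi) * B ^ k) := by
          apply mul_le_mul_of_nonneg_right _ (by positivity)
          push_cast at hBge ⊢
          exact hBge
      _ = e1/(2*Real.pi) * B ^ (k+1) := by ring

/-- **A binomial tail estimate.**
For all integers `r ≥ 3`, `N ≥ 1` and every real `z > 0` with `ez(1 + r/N) < 1`,
`Σ_{j=N}^∞ z^j C(r+j-1, j) ≤ (e/(2π)) (ez(1 + r/N))^N / (1 - ez(1 + r/N))`. -/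
theorem statement_15 (r N : ℕ) (hr : 3 ≤ r) (hN : 1 ≤ N) (z : ℝ) (hz : 0 < z)
    (h : Real.exp 1 * z * (1 + (r : ℝ) / N) < 1) :
    ∑' j : ℕ, z ^ (j + N) * ((r + (j + N) - 1).choose (j + N) : ℝ) ≤
      Real.exp 1 / (2 * Real.pi) *
        ((Real.exp 1 * z * (1 + (r : ℝ) / N)) ^ N /
          (1 - Real.exp 1 * z * (1 + (r : ℝ) / N))) := by
  set e1 := Real.exp 1 with he1
  have hNR : (1:ℝ) ≤ (N:ℝ) := by exact_mod_cast hN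
  have hN0 : (0:ℝ) < (N:ℝ) := by linarith
  have hrR : (3:ℝ) ≤ (r:ℝ) := by exact_mod_cast hr
  have he1pos : (0:ℝ) < e1 := Real.exp_pos 1
  have he1ge : (2.7182818283:ℝ) < e1 := Real.exp_one_gt_d9
  have hpi : (0:ℝ) < Real.pi := Real.pi_pos
  have hpilt : Real.pi < 3.15 := by
    have := Real.pi_lt_d2
    norm_num at this ⊢
    linarith
  set B : ℝ := e1 * (1 + (r:ℝ)/N) with hB
  have hfrac : (0:ℝ) < 1 + (r:ℝ)/N := by positivity
  have hBpos : 0 < B := by positivity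
  have hBge : 1 + (r:ℝ)/N ≤ B := by nlinarith [hfrac, he1ge]
  have key : ∀ k, N ≤ k → ((r + k - 1).choose k : ℝ) ≤ e1/(2*Real.pi) * B ^ k := by
    rw [he1, hB]
    exact key_choose_bound r N hr hN
  set a : ℝ := e1 * z * (1 + (r:ℝ)/N) with ha
  have haB : a = z * B := by rw [ha, hB]; ring
  have ha0 : 0 ≤ a := by positivity
  have ha1 : a < 1 := h
  have hterm : ∀ j : ℕ, z ^ (j + N) * ((r + (j + N) - 1).choose (j + N) : ℝ)
      ≤ (e1/(2*Real.pi) * a ^ N) * a ^ j := by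
    intro j
    have hjk : N ≤ j + N := Nat.le_add_left N j
    calc z ^ (j + N) * ((r + (j + N) - 1).choose (j + N) : ℝ)
        ≤ z ^ (j + N) * (e1/(2*Real.pi) * B ^ (j+N)) :=
          mul_le_mul_of_nonneg_left (key _ hjk) (by positivity)
      _ = (e1/(2*Real.pi) * a ^ N) * a ^ j := by
          rw [haB, mul_pow z B N, mul_pow z B j, pow_add z j N, pow_add B j N]; ring
  have hgsum : Summable (fun j : ℕ => (e1/(2*Real.pi) * a ^ N) * a ^ j) :=
    (summable_geometric_of_lt_one ha0 ha1).mul_left _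
  have hlsum : Summable (fun j : ℕ => z ^ (j + N) * ((r + (j + N) - 1).choose (j + N) : ℝ)) :=
    Summable.of_nonneg_of_le (fun j => by positivity) hterm hgsum
  calc ∑' j : ℕ, z ^ (j + N) * ((r + (j + N) - 1).choose (j + N) : ℝ)
      ≤ ∑' j : ℕ, (e1/(2*Real.pi) * a ^ N) * a ^ j := Summable.tsum_le_tsum hterm hlsum hgsum
    _ = (e1/(2*Real.pi) * a ^ N) * (1 - a)⁻¹ := by
        rw [tsum_mul_left, tsum_geometric_of_lt_one ha0 ha1]
    _ = e1 / (2*Real.pi) * (a ^ N / (1 - a)) := by ring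

end Perco
end
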